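/- arXiv:0907.3414 — 6 statements merged into one kernel-verified Lean document; each statement's English description precedes it below -/
import Mathlib

section
/- Let X be a set of clock valuations over a finite clock set C, and let F, F' : X → ℝ be simple functions on a clock region R, i.e., each is either constant with an integer value e, or of the form s ↦ e - s(c) for some integer e and clock c, where all valuations in R agree on the integer parts of all clocks and on the ordering (including equalities) of the fractional parts of all clocks. Then either F(s) ≤ F'(s) for all s ∈ R, or F'(s) ≤ F(s) for all s ∈ R. Consequently, the pointwise minimum and pointwise maximum of F and F' are again simple functions on R. -/
/-- Two clock valuations are region-equivalent: same integer parts of all clocks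
and same weak ordering of the fractional parts of all clocks. -/
def RegionEquiv {C : Type*} (ν ν' : C → ℝ) : Prop :=
  (∀ c, ⌊ν c⌋ = ⌊ν' c⌋) ∧
  ∀ c c', Int.fract (ν c) ≤ Int.fract (ν c') ↔ Int.fract (ν' c) ≤ Int.fract (ν' c')

/-- A function is simple on a set `R` of clock valuations if it is constant with
integer value, or of the form `ν ↦ e - ν c`. -/
def IsSimpleOn {C : Type*} (R : Set (C → ℝ)) (F : (C → ℝ) → ℝ) : Prop :=
  (∃ e : ℤ, ∀ ν ∈ R, F ν = (e : ℝ)) ∨ (∃ e : ℤ, ∃ c : C, ∀ ν ∈ R, F ν = (e : ℝ) - ν c)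

lemma isSimpleOn_congr {C : Type*} {R : Set (C → ℝ)} {F G : (C → ℝ) → ℝ}
    (h : ∀ ν ∈ R, G ν = F ν) (hF : IsSimpleOn R F) : IsSimpleOn R G := by
  rcases hF with ⟨e, he⟩ | ⟨e, c, he⟩
  · exact Or.inl ⟨e, fun ν hν => (h ν hν).trans (he ν hν)⟩
  · exact Or.inr ⟨e, c, fun ν hν => (h ν hν).trans (he ν hν)⟩

lemma comparable {C : Type*} (R : Set (C → ℝ))
    (hreg : ∀ ν ∈ R, ∀ ν' ∈ R, RegionEquiv ν ν')
    (F F' : (C → ℝ) → ℝ) (hF : IsSimpleOn R F) (hF' : IsSimpleOn R F') :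
    (∀ s ∈ R, F s ≤ F' s) ∨ (∀ s ∈ R, F' s ≤ F s) := by
  by_cases hne : ∃ ν₀, ν₀ ∈ R
  swap
  · exact Or.inl fun s hs => absurd ⟨s, hs⟩ hne
  obtain ⟨ν₀, hν₀⟩ := hne
  rcases hF with ⟨e, he⟩ | ⟨e, c, he⟩ <;> rcases hF' with ⟨e', he'⟩ | ⟨e', c', he'⟩
  · rcases le_total (e : ℝ) (e' : ℝ) with h | h
    · exact Or.inl fun s hs => by rw [he s hs, he' s hs]; exact h
    · exact Or.inr fun s hs => by rw [he s hs, he' s hs]; exact h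
  -- const vs clock
  · set n := ⌊ν₀ c'⌋ with hn
    by_cases h : n + 1 ≤ e' - e
    · refine Or.inl fun s hs => ?_
      rw [he s hs, he' s hs]
      have hfl : ⌊s c'⌋ = n := (hreg s hs ν₀ hν₀).1 c'
      have h1 : (⌊s c'⌋ : ℝ) + Int.fract (s c') = s c' := Int.floor_add_fract _
      have h2 : Int.fract (s c') < 1 := Int.fract_lt_one _
      rw [hfl] at h1
      have hc : (n : ℝ) + 1 ≤ (e' : ℝ) - e := by exact_mod_cast h
      linarith
    · refine Or.inr fun s hs => ?_
      rw [he s hs, he' s hs]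
      have hfl : ⌊s c'⌋ = n := (hreg s hs ν₀ hν₀).1 c'
      have h1 : (⌊s c'⌋ : ℝ) + Int.fract (s c') = s c' := Int.floor_add_fract _
      have h2 : 0 ≤ Int.fract (s c') := Int.fract_nonneg _
      rw [hfl] at h1
      have hc : (e' : ℝ) - e ≤ (n : ℝ) := by exact_mod_cast Int.lt_add_one_iff.mp (lt_of_not_ge h)
      linarith
  -- clock vs const
  · set n := ⌊ν₀ c⌋ with hn
    by_cases h : n + 1 ≤ e - e'
    · refine Or.inr fun s hs => ?_
      rw [he s hs, he' s hs]
      have hfl : ⌊s c⌋ = n := (hreg s hs ν₀ hν₀).1 c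
      have h1 : (⌊s c⌋ : ℝ) + Int.fract (s c) = s c := Int.floor_add_fract _
      have h2 : Int.fract (s c) < 1 := Int.fract_lt_one _
      rw [hfl] at h1
      have hc : (n : ℝ) + 1 ≤ (e : ℝ) - e' := by exact_mod_cast h
      linarith
    · refine Or.inl fun s hs => ?_
      rw [he s hs, he' s hs]
      have hfl : ⌊s c⌋ = n := (hreg s hs ν₀ hν₀).1 c
      have h1 : (⌊s c⌋ : ℝ) + Int.fract (s c) = s c := Int.floor_add_fract _
      have h2 : 0 ≤ Int.fract (s c) := Int.fract_nonneg _
      rw [hfl] at h1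
      have hc : (e : ℝ) - e' ≤ (n : ℝ) := by exact_mod_cast Int.lt_add_one_iff.mp (lt_of_not_ge h)
      linarith
  -- clock vs clock
  · set n := ⌊ν₀ c⌋ with hn
    set n' := ⌊ν₀ c'⌋ with hn'
    have key : ∀ s ∈ R, ⌊s c⌋ = n ∧ ⌊s c'⌋ = n' :=
      fun s hs => ⟨(hreg s hs ν₀ hν₀).1 c, (hreg s hs ν₀ hν₀).1 c'⟩
    rcases lt_trichotomy (n' - n) (e' - e) with h | h | h
    · refine Or.inl fun s hs => ?_
      rw [he s hs, he' s hs]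
      obtain ⟨hc, hc'⟩ := key s hs
      have h1 : (⌊s c⌋ : ℝ) + Int.fract (s c) = s c := Int.floor_add_fract _
      have h1' : (⌊s c'⌋ : ℝ) + Int.fract (s c') = s c' := Int.floor_add_fract _
      rw [hc] at h1; rw [hc'] at h1'
      have h2 : 0 ≤ Int.fract (s c) := Int.fract_nonneg _
      have h2' : Int.fract (s c') < 1 := Int.fract_lt_one _
      have hcst : (n' : ℝ) - n + 1 ≤ (e' : ℝ) - e := by exact_mod_cast h
      linarith
    · -- equal floors difference: decide by fractional parts of ν₀
      rcases le_total (Int.fract (ν₀ c')) (Int.fract (ν₀ c)) with hfo | hfo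
      · refine Or.inl fun s hs => ?_
        rw [he s hs, he' s hs]
        obtain ⟨hc, hc'⟩ := key s hs
        have h1 : (⌊s c⌋ : ℝ) + Int.fract (s c) = s c := Int.floor_add_fract _
        have h1' : (⌊s c'⌋ : ℝ) + Int.fract (s c') = s c' := Int.floor_add_fract _
        rw [hc] at h1; rw [hc'] at h1'
        have hf : Int.fract (s c') ≤ Int.fract (s c) :=
          ((hreg s hs ν₀ hν₀).2 c' c).mpr hfo
        have hcst : (n' : ℝ) - n = (e' : ℝ) - e := by exact_mod_cast h
        linarith
      · refine Or.inr fun s hs => ?_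
        rw [he s hs, he' s hs]
        obtain ⟨hc, hc'⟩ := key s hs
        have h1 : (⌊s c⌋ : ℝ) + Int.fract (s c) = s c := Int.floor_add_fract _
        have h1' : (⌊s c'⌋ : ℝ) + Int.fract (s c') = s c' := Int.floor_add_fract _
        rw [hc] at h1; rw [hc'] at h1'
        have hf : Int.fract (s c) ≤ Int.fract (s c') :=
          ((hreg s hs ν₀ hν₀).2 c c').mpr hfo
        have hcst : (n' : ℝ) - n = (e' : ℝ) - e := by exact_mod_cast h
        linarith
    · refine Or.inr fun s hs => ?_
      rw [he s hs, he' s hs]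
      obtain ⟨hc, hc'⟩ := key s hs
      have h1 : (⌊s c⌋ : ℝ) + Int.fract (s c) = s c := Int.floor_add_fract _
      have h1' : (⌊s c'⌋ : ℝ) + Int.fract (s c') = s c' := Int.floor_add_fract _
      rw [hc] at h1; rw [hc'] at h1'
      have h2 : Int.fract (s c) < 1 := Int.fract_lt_one _
      have h2' : 0 ≤ Int.fract (s c') := Int.fract_nonneg _
      have hcst : (e' : ℝ) - e + 1 ≤ (n' : ℝ) - n := by exact_mod_cast h
      linarith

theorem stmt0 {C : Type*} [Fintype C] (R : Set (C → ℝ))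
    (hnonneg : ∀ ν ∈ R, ∀ c, 0 ≤ ν c)
    (hreg : ∀ ν ∈ R, ∀ ν' ∈ R, RegionEquiv ν ν')
    (F F' : (C → ℝ) → ℝ) (hF : IsSimpleOn R F) (hF' : IsSimpleOn R F') :
    ((∀ s ∈ R, F s ≤ F' s) ∨ (∀ s ∈ R, F' s ≤ F s)) ∧
    IsSimpleOn R (fun s => min (F s) (F' s)) ∧
    IsSimpleOn R (fun s => max (F s) (F' s)) := by
  have hcmp := comparable R hreg F F' hF hF'
  refine ⟨hcmp, ?_, ?_⟩
  · rcases hcmp with h | h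
    · exact isSimpleOn_congr (fun ν hν => min_eq_left (h ν hν)) hF
    · exact isSimpleOn_congr (fun ν hν => min_eq_right (h ν hν)) hF'
  · rcases hcmp with h | h
    · exact isSimpleOn_congr (fun ν hν => max_eq_right (h ν hν)) hF'
    · exact isSimpleOn_congr (fun ν hν => max_eq_left (h ν hν)) hF
end

section
/- Let ν, ν' be two clock valuations in the same clock region (i.e., agreeing on integer parts of all clocks and on the ordering, including equalities and comparison with zero, of fractional parts of all clocks). Then for any two clocks c, c', ⌊ν(c') - ν(c)⌋ = ⌊ν'(c') - ν'(c)⌋. In particular, for fixed integers e, e' and clocks c, c', the function ν ↦ ⌊(e' - ν(c')) - (e - ν(c))⌋ is constant on each clock region. -/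
lemma floor_sub_eq (a b : ℝ) :
    ⌊a - b⌋ = ⌊a⌋ - ⌊b⌋ + (if Int.fract b ≤ Int.fract a then 0 else -1) := by
  have h : a - b = ((⌊a⌋ - ⌊b⌋ : ℤ) : ℝ) + (Int.fract a - Int.fract b) := by
    have ha := Int.fract_add_floor a
    have hb := Int.fract_add_floor b
    push_cast
    linarith
  rw [h, Int.floor_intCast_add]
  congr 1
  by_cases hle : Int.fract b ≤ Int.fract a
  · simp only [hle, if_true]
    apply Int.floor_eq_iff.mpr
    constructor
    · simpa using hle
    · have := Int.fract_lt_one a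
      have := Int.fract_nonneg b
      push_cast; linarith
  · simp only [hle, if_false]
    push_neg at hle
    have h1 : (-1 : ℤ) ≤ ⌊Int.fract a - Int.fract b⌋ := by
      apply Int.le_floor.mpr
      have := Int.fract_nonneg a
      have := Int.fract_lt_one b
      push_cast; linarith
    have h2 : ⌊Int.fract a - Int.fract b⌋ < 0 := by
      apply Int.floor_lt.mpr
      push_cast; linarith
    omega

theorem stmt1 {C : Type*} (ν ν' : C → ℝ)
    (h0 : ∀ c, 0 ≤ ν c) (h0' : ∀ c, 0 ≤ ν' c)
    (hreg : RegionEquiv ν ν') :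
    (∀ c c', ⌊ν c' - ν c⌋ = ⌊ν' c' - ν' c⌋) ∧
    ∀ (e e' : ℤ) (c c' : C),
      ⌊((e' : ℝ) - ν c') - ((e : ℝ) - ν c)⌋ = ⌊((e' : ℝ) - ν' c') - ((e : ℝ) - ν' c)⌋ := by
  obtain ⟨hfl, hfr⟩ := hreg
  have main : ∀ c c', ⌊ν c' - ν c⌋ = ⌊ν' c' - ν' c⌋ := by
    intro c c'
    rw [floor_sub_eq, floor_sub_eq, hfl c, hfl c']
    congr 1
    by_cases h : Int.fract (ν c) ≤ Int.fract (ν c')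
    · simp [h, (hfr c c').mp h]
    · have h' : ¬ Int.fract (ν' c) ≤ Int.fract (ν' c') := fun hh => h ((hfr c c').mpr hh)
      simp [h, h']
  refine ⟨main, fun e e' c c' => ?_⟩
  have k1 : ((e' : ℝ) - ν c') - ((e : ℝ) - ν c) = (ν c - ν c') + ((e' - e : ℤ) : ℝ) := by
    push_cast; ring
  have k2 : ((e' : ℝ) - ν' c') - ((e : ℝ) - ν' c) = (ν' c - ν' c') + ((e' - e : ℤ) : ℝ) := by
    push_cast; ring
  rw [k1, k2, Int.floor_add_intCast, Int.floor_add_intCast, main c' c]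
end

section
/- Let F be a simple function on a set of clock valuations. Fix b ∈ ℕ, a clock c, an action a with reset set ρ(a), and suppose for all valuations s in a region R we have s(c) ≤ b. Define G(s) = t(s) + F(Reset(s + t(s), ρ(a))) where t(s) = b - s(c). Then G is a simple function on R: G(s) = (b + e) - s(c) if F is constantly e, or if F(ν) = e - ν(c') with c' ∈ ρ(a); and G(s) = e - s(c') if F(ν) = e - ν(c') with c' ∉ ρ(a) (using that the value of clock c' after delay t(s) is s(c') + t(s)). -/
/-- `G(s) = t(s) + F(Reset(s + t(s), ρ))` where `t(s) = b - s(c)`. -/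
def Gfun {C : Type*} (ρ : Set C) [DecidablePred (· ∈ ρ)]
    (b : ℕ) (c : C) (F : (C → ℝ) → ℝ) (s : C → ℝ) : ℝ :=
  ((b : ℝ) - s c) + F (fun c' => if c' ∈ ρ then 0 else s c' + ((b : ℝ) - s c))

theorem stmt4 {C : Type*} (ρ : Set C) [DecidablePred (· ∈ ρ)]
    (R : Set (C → ℝ)) (b : ℕ) (c : C)
    (hnonneg : ∀ s ∈ R, ∀ c', 0 ≤ s c')
    (hb : ∀ s ∈ R, s c ≤ (b : ℝ))
    (F : (C → ℝ) → ℝ) :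
    ((∀ e : ℤ, (∀ ν, F ν = (e : ℝ)) → ∀ s ∈ R, Gfun ρ b c F s = ((b : ℝ) + e) - s c) ∧
     (∀ e : ℤ, ∀ c' ∈ ρ, (∀ ν, F ν = (e : ℝ) - ν c') →
        ∀ s ∈ R, Gfun ρ b c F s = ((b : ℝ) + e) - s c) ∧
     (∀ e : ℤ, ∀ c', c' ∉ ρ → (∀ ν, F ν = (e : ℝ) - ν c') →
        ∀ s ∈ R, Gfun ρ b c F s = (e : ℝ) - s c')) ∧
    (((∃ e : ℤ, ∀ ν, F ν = (e : ℝ)) ∨ (∃ e : ℤ, ∃ c', ∀ ν, F ν = (e : ℝ) - ν c')) →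
      IsSimpleOn R (Gfun ρ b c F)) := by
  have h1 : ∀ e : ℤ, (∀ ν, F ν = (e : ℝ)) → ∀ s ∈ R, Gfun ρ b c F s = ((b : ℝ) + e) - s c := by
    intro e he s _
    simp [Gfun, he]; ring
  have h2 : ∀ e : ℤ, ∀ c' ∈ ρ, (∀ ν, F ν = (e : ℝ) - ν c') →
      ∀ s ∈ R, Gfun ρ b c F s = ((b : ℝ) + e) - s c := by
    intro e c' hc' he s _
    simp [Gfun, he, hc']; ring
  have h3 : ∀ e : ℤ, ∀ c', c' ∉ ρ → (∀ ν, F ν = (e : ℝ) - ν c') →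
      ∀ s ∈ R, Gfun ρ b c F s = (e : ℝ) - s c' := by
    intro e c' hc' he s _
    simp [Gfun, he, hc']; ring
  refine ⟨⟨h1, h2, h3⟩, ?_⟩
  rintro (⟨e, he⟩ | ⟨e, c', he⟩)
  · right; exact ⟨(b : ℤ) + e, c, fun s hs => by rw [h1 e he s hs]; push_cast; ring⟩
  · by_cases hc' : c' ∈ ρ
    · right; exact ⟨(b : ℤ) + e, c, fun s hs => by rw [h2 e c' hc' he s hs]; push_cast; ring⟩
    · right; exact ⟨e, c', fun s hs => h3 e c' hc' he s hs⟩
end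

section
/- Fixed points of the Max strategy-improvement operator solve the max optimality equations: Let G be a finite graph with vertex set partitioned into Max-controlled and choiceless vertices, each edge labelled with a cost function. Let χ be a positional strategy for Max (a choice of one outgoing edge at each Max vertex), and suppose (T, D) solves the 0/1-player optimality equations for the subgraph G↾χ obtained by restricting Max vertices to their chosen edge. If for every Max-controlled state s the chosen edge χ(s) attains the lexicographic maximum of (t + T(s'), 1 + D(s')) over all outgoing edges of s (i.e., Improve_Max(χ, (T, D)) = χ), then (T, D) solves the full max optimality equations of G: T(s) = max over all outgoing edges (t + T(s')) at every Max vertex s. -/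
open scoped Classical

/-- Lexicographic (non-strict) order on pairs (time value, discrete distance). -/
def lexLe (p q : EReal × ℕ∞) : Prop := p.1 < q.1 ∨ (p.1 = q.1 ∧ p.2 ≤ q.2)

/-- The pair `(t + T(s'), 1 + D(s'))` associated with a move `m = (t, s')`. -/
noncomputable def mval {S : Type*} (T : S → EReal) (D : S → ℕ∞) (m : ℝ × S) : EReal × ℕ∞ :=
  ((m.1 : EReal) + T m.2, 1 + D m.2)

/-- `(T, D)` solves the (lexicographic) max optimality equations for the graph with
moves `moves` and final set `F`: `(0,0)` on final states, and at every nonfinal state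
the value is attained by some move and dominates all moves. -/
def SolvesOpt {S : Type*} (moves : S → Set (ℝ × S)) (F : Set S)
    (T : S → EReal) (D : S → ℕ∞) : Prop :=
  (∀ s ∈ F, T s = 0 ∧ D s = 0) ∧
  ∀ s ∉ F, ∃ m ∈ moves s, (T s, D s) = mval T D m ∧
    ∀ m' ∈ moves s, lexLe (mval T D m') (T s, D s)

theorem stmt10 {S : Type*} [Fintype S] (F MaxV : Set S) (moves : S → Set (ℝ × S))
    (hpos : ∀ s, ∀ m ∈ moves s, 0 ≤ m.1)
    (hfin : ∀ s, (moves s).Finite)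
    (hchoiceless : ∀ s ∉ MaxV, s ∉ F → ∃! m, m ∈ moves s)
    (χ : S → ℝ × S) (hχ : ∀ s ∈ MaxV, s ∉ F → χ s ∈ moves s)
    (T : S → EReal) (D : S → ℕ∞)
    -- (T, D) solves the optimality equations of the subgraph G↾χ
    (hsol : SolvesOpt (fun s => if s ∈ MaxV then ({χ s} : Set (ℝ × S)) else moves s) F T D)
    -- χ is a fixed point of Improve_Max: at every Max vertex the chosen edge attains
    -- the lexicographic maximum over all outgoing edges
    (hfix : ∀ s ∈ MaxV, s ∉ F → ∀ m ∈ moves s, lexLe (mval T D m) (mval T D (χ s))) :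
    SolvesOpt moves F T D := by
  refine ⟨hsol.1, fun s hs => ?_⟩
  obtain ⟨m, hm, heq, hdom⟩ := hsol.2 s hs
  by_cases hMax : s ∈ MaxV
  · simp only [if_pos hMax, Set.mem_singleton_iff] at hm
    subst hm
    exact ⟨χ s, hχ s hMax hs, heq, fun m' hm' => heq ▸ hfix s hMax hs m' hm'⟩
  · simp only [if_neg hMax] at hm hdom
    exact ⟨m, hm, heq, hdom⟩
end

section
/- The solution of the exact optimality equations is the lexicographically greatest solution of the relaxed inequalities: Let S be a finite state set with final set F, each nonfinal state s having a unique successor s' with cost t(s) ≥ 0 (a 0-player system). Suppose (T, D) satisfies T(s)=0, D(s)=0 on F and T(s) = t(s) + T(s'), D(s) = 1 + D(s') on S \ F, and suppose (T≤, D≤) satisfies (T≤(s), D≤(s)) ≤_lex (0,0) on F and (T≤(s), D≤(s)) ≤_lex (t(s) + T≤(s'), 1 + D≤(s')) on S \ F. Then for every s with D(s) < ∞, (T≤(s), D≤(s)) ≤_lex (T(s), D(s)); and if some relaxed inequality is strict at a reachable state, then (T≤(s), D≤(s)) <_lex (T(s), D(s)) at some s. -/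
/-! By induction on the distance `D s` to `F`: on `F` the relaxed inequality is the claim, and off
`F` the step map `(a, m) ↦ (t s + a, 1 + m)` is monotone for `≤_lex`, so the relaxed inequality at `s`
followed by the induction hypothesis at `succ s` gives the claim at `s`. A strict relaxed inequality
at a state with `D s < ∞` then stays strict through this chain. -/

def elexLe (p q : EReal × ℕ∞) : Prop := p.1 < q.1 ∨ (p.1 = q.1 ∧ p.2 ≤ q.2)

def elexLt (p q : EReal × ℕ∞) : Prop := p.1 < q.1 ∨ (p.1 = q.1 ∧ p.2 < q.2)

lemma elexLe_trans {p q r : EReal × ℕ∞} (hpq : elexLe p q) (hqr : elexLe q r) : elexLe p r := by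
  rcases hpq with h | ⟨h, h'⟩ <;> rcases hqr with g | ⟨g, g'⟩
  · exact Or.inl (h.trans g)
  · exact Or.inl (g ▸ h)
  · exact Or.inl (h ▸ g)
  · exact Or.inr ⟨h.trans g, h'.trans g'⟩

lemma elexLt_of_elexLt_of_elexLe {p q r : EReal × ℕ∞} (hpq : elexLt p q) (hqr : elexLe q r) :
    elexLt p r := by
  rcases hpq with h | ⟨h, h'⟩ <;> rcases hqr with g | ⟨g, g'⟩
  · exact Or.inl (h.trans g)
  · exact Or.inl (g ▸ h)
  · exact Or.inl (h ▸ g)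
  · exact Or.inr ⟨h.trans g, h'.trans_le g'⟩

lemma elexLt_of_elexLe_of_ne {p q : EReal × ℕ∞} (hle : elexLe p q) (hne : p ≠ q) : elexLt p q := by
  rcases hle with h | ⟨h, h'⟩
  · exact Or.inl h
  · exact Or.inr ⟨h, h'.lt_of_ne fun h₂ ↦ hne (Prod.ext h h₂)⟩

lemma elexLe_coe_add_one_add {c : ℝ} {a b : EReal} {m n : ℕ∞} (h : elexLe (a, m) (b, n)) :
    elexLe ((c : EReal) + a, 1 + m) ((c : EReal) + b, 1 + n) := by
  rcases h with h | ⟨h, h'⟩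
  · exact Or.inl (EReal.add_lt_add_left_coe h c)
  · exact Or.inr ⟨congrArg ((c : EReal) + ·) h, add_le_add_right h' 1⟩

section ZeroPlayer

variable {S : Type*} {F : Set S} {succ : S → S} {t : S → ℝ} {T Tle : S → EReal} {D Dle : S → ℕ∞}

theorem elexLe_of_eq_natCast
    (hTF : ∀ s ∈ F, T s = 0 ∧ D s = 0)
    (hT : ∀ s ∉ F, T s = (t s : EReal) + T (succ s) ∧ D s = 1 + D (succ s))
    (hleF : ∀ s ∈ F, elexLe (Tle s, Dle s) (0, 0))
    (hle : ∀ s ∉ F, elexLe (Tle s, Dle s) ((t s : EReal) + Tle (succ s), 1 + Dle (succ s))) :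
    ∀ (n : ℕ) (s : S), D s = n → elexLe (Tle s, Dle s) (T s, D s)
  | n, s, hs => by
    by_cases hF : s ∈ F
    · rw [(hTF s hF).1, (hTF s hF).2]
      exact hleF s hF
    obtain ⟨hTs, hDs⟩ := hT s hF
    rw [hDs] at hs ⊢
    rw [hTs]
    cases n with
    | zero => simp at hs
    | succ k =>
      have hk : D (succ s) = k := by
        rw [Nat.cast_succ, add_comm (k : ℕ∞)] at hs
        exact WithTop.add_left_cancel ENat.one_ne_top hs
      exact elexLe_trans (hle s hF) (elexLe_coe_add_one_add
        (elexLe_of_eq_natCast hTF hT hleF hle k (succ s) hk))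

theorem elexLe_of_ne_top
    (hTF : ∀ s ∈ F, T s = 0 ∧ D s = 0)
    (hT : ∀ s ∉ F, T s = (t s : EReal) + T (succ s) ∧ D s = 1 + D (succ s))
    (hleF : ∀ s ∈ F, elexLe (Tle s, Dle s) (0, 0))
    (hle : ∀ s ∉ F, elexLe (Tle s, Dle s) ((t s : EReal) + Tle (succ s), 1 + Dle (succ s)))
    {s : S} (hs : D s ≠ ⊤) : elexLe (Tle s, Dle s) (T s, D s) := by
  obtain ⟨n, hn⟩ := ENat.ne_top_iff_exists.mp hs
  exact elexLe_of_eq_natCast hTF hT hleF hle n s hn.symm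

end ZeroPlayer

theorem stmt11_general {S : Type*} (F : Set S) (succ : S → S)
    (t : S → ℝ)
    (T Tle : S → EReal) (D Dle : S → ℕ∞)
    -- (T, D) satisfies the exact 0-player optimality equations
    (hTF : ∀ s ∈ F, T s = 0 ∧ D s = 0)
    (hT : ∀ s ∉ F, T s = (t s : EReal) + T (succ s) ∧ D s = 1 + D (succ s))
    -- (T≤, D≤) satisfies the relaxed inequalities
    (hleF : ∀ s ∈ F, elexLe (Tle s, Dle s) (0, 0))
    (hle : ∀ s ∉ F, elexLe (Tle s, Dle s) ((t s : EReal) + Tle (succ s), 1 + Dle (succ s))) :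
    (∀ s, D s ≠ ⊤ → elexLe (Tle s, Dle s) (T s, D s)) ∧
    ((∃ s, D s ≠ ⊤ ∧
        ((s ∈ F ∧ (Tle s, Dle s) ≠ ((0 : EReal), (0 : ℕ∞))) ∨
         (s ∉ F ∧ (Tle s, Dle s) ≠ ((t s : EReal) + Tle (succ s), 1 + Dle (succ s))))) →
      ∃ s, D s ≠ ⊤ ∧ elexLt (Tle s, Dle s) (T s, D s)) := by
  have below : ∀ s, D s ≠ ⊤ → elexLe (Tle s, Dle s) (T s, D s) :=
    fun _ ↦ elexLe_of_ne_top hTF hT hleF hle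
  refine ⟨below, ?_⟩
  rintro ⟨s, hs, ⟨hF, hne⟩ | ⟨hF, hne⟩⟩ <;> refine ⟨s, hs, ?_⟩
  · rw [(hTF s hF).1, (hTF s hF).2]
    exact elexLt_of_elexLe_of_ne (hleF s hF) hne
  · obtain ⟨hTs, hDs⟩ := hT s hF
    have hsucc : D (succ s) ≠ ⊤ := fun h ↦ hs (by rw [hDs, h, add_top])
    rw [hTs, hDs]
    exact elexLt_of_elexLt_of_elexLe (elexLt_of_elexLe_of_ne (hle s hF) hne)
      (elexLe_coe_add_one_add (below _ hsucc))

theorem stmt11 {S : Type*} [Fintype S] (F : Set S) (succ : S → S)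
    (t : S → ℝ) (ht : ∀ s, 0 ≤ t s)
    (T Tle : S → EReal) (D Dle : S → ℕ∞)
    -- (T, D) satisfies the exact 0-player optimality equations
    (hTF : ∀ s ∈ F, T s = 0 ∧ D s = 0)
    (hT : ∀ s ∉ F, T s = (t s : EReal) + T (succ s) ∧ D s = 1 + D (succ s))
    -- (T≤, D≤) satisfies the relaxed inequalities
    (hleF : ∀ s ∈ F, elexLe (Tle s, Dle s) (0, 0))
    (hle : ∀ s ∉ F, elexLe (Tle s, Dle s) ((t s : EReal) + Tle (succ s), 1 + Dle (succ s))) :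
    (∀ s, D s ≠ ⊤ → elexLe (Tle s, Dle s) (T s, D s)) ∧
    ((∃ s, D s ≠ ⊤ ∧
        ((s ∈ F ∧ (Tle s, Dle s) ≠ ((0 : EReal), (0 : ℕ∞))) ∨
         (s ∉ F ∧ (Tle s, Dle s) ≠ ((t s : EReal) + Tle (succ s), 1 + Dle (succ s))))) →
      ∃ s, D s ≠ ⊤ ∧ elexLt (Tle s, Dle s) (T s, D s)) :=
  stmt11_general F succ t T Tle D Dle hTF hT hleF hle
end

section
/- Every thin region is determined by a clock and an integer deadline: for every thin clock region P' over clocks C with bound k, there exist b ∈ {0,...,k} and c ∈ C such that for every region P in the past of P' and every valuation ν ∈ P, the valuation ν + (b - ν(c)) lies in P'. -/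
/-- A `k`-bounded clock valuation. -/
def Valid {C : Type*} (k : ℕ) (ν : C → ℝ) : Prop := ∀ c, 0 ≤ ν c ∧ ν c ≤ (k : ℝ)

/-- Time elapse. -/
def shift {C : Type*} (ν : C → ℝ) (t : ℝ) : C → ℝ := fun c => ν c + t

/-- A clock region: an equivalence class of region equivalence on `k`-bounded
valuations. -/
def IsRegion {C : Type*} (k : ℕ) (P : Set (C → ℝ)) : Prop :=
  ∃ ν₀, Valid k ν₀ ∧ P = {ν | Valid k ν ∧ RegionEquiv ν ν₀}

/-- A region is thin if it is not preserved under any small positive time elapse. -/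
def Thin {C : Type*} (k : ℕ) (P : Set (C → ℝ)) : Prop :=
  ∀ ν ∈ P, ∀ ε : ℝ, 0 < ε → Valid k (shift ν ε) → shift ν ε ∉ P

/-- `Q` is reachable from `P` by time passage. -/
def Reach {C : Type*} (k : ℕ) (P Q : Set (C → ℝ)) : Prop :=
  ∃ ν ∈ P, ∃ t : ℝ, 0 ≤ t ∧ shift ν t ∈ Q

/-- `P'` is the time successor of `P`. -/
def TimeSucc {C : Type*} (k : ℕ) (P P' : Set (C → ℝ)) : Prop :=
  P ≠ P' ∧ Reach k P P' ∧
  ∀ P'', IsRegion k P'' → Reach k P P'' → Reach k P'' P' → P'' = P ∨ P'' = P'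

-- helpers

lemma regEquiv_refl {C : Type*} (ν : C → ℝ) : RegionEquiv ν ν :=
  ⟨fun _ => rfl, fun _ _ => Iff.rfl⟩

lemma regEquiv_symm {C : Type*} {ν ν' : C → ℝ} (h : RegionEquiv ν ν') : RegionEquiv ν' ν :=
  ⟨fun c => (h.1 c).symm, fun c c' => (h.2 c c').symm⟩

lemma regEquiv_trans {C : Type*} {a b c : C → ℝ} (h1 : RegionEquiv a b)
    (h2 : RegionEquiv b c) : RegionEquiv a c :=
  ⟨fun x => (h1.1 x).trans (h2.1 x), fun x y => (h1.2 x y).trans (h2.2 x y)⟩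

lemma small_floor {a : ℝ} (h1 : -1 < a) (h2 : a < 1) :
    ⌊a⌋ = if 0 ≤ a then 0 else -1 := by
  split_ifs with h
  · exact Int.floor_eq_zero_iff.2 ⟨h, h2⟩
  · push_neg at h
    apply Int.floor_eq_iff.mpr
    constructor <;> push_cast <;> linarith

lemma small_fract {a : ℝ} (h1 : -1 < a) (h2 : a < 1) :
    Int.fract a = if 0 ≤ a then a else a + 1 := by
  split_ifs with h
  · exact Int.fract_eq_self.2 ⟨h, h2⟩
  · push_neg at h
    have := Int.fract_add_intCast a 1
    rw [← this]
    push_cast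
    exact Int.fract_eq_self.2 ⟨by linarith, by linarith⟩

lemma shift_decomp {C : Type*} (ν : C → ℝ) (c c' : C) (B : ℤ) :
    shift ν ((B:ℝ) - ν c) c' = ((⌊ν c'⌋ - ⌊ν c⌋ + B : ℤ) : ℝ) +
      (Int.fract (ν c') - Int.fract (ν c)) := by
  simp only [shift, Int.fract]
  push_cast
  ring

lemma fract_bounds (a : ℝ) : 0 ≤ Int.fract a ∧ Int.fract a < 1 :=
  ⟨Int.fract_nonneg a, Int.fract_lt_one a⟩

lemma shift_floor {C : Type*} (ν : C → ℝ) (c c' : C) (B : ℤ) :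
    ⌊shift ν ((B:ℝ) - ν c) c'⌋ = ⌊ν c'⌋ - ⌊ν c⌋ + B +
      (if Int.fract (ν c) ≤ Int.fract (ν c') then 0 else -1) := by
  rw [shift_decomp, Int.floor_intCast_add, small_floor (a := Int.fract (ν c') - Int.fract (ν c))
    (by have := fract_bounds (ν c'); have := fract_bounds (ν c); linarith)
    (by have := fract_bounds (ν c'); have := fract_bounds (ν c); linarith)]
  simp only [sub_nonneg]

lemma shift_fract {C : Type*} (ν : C → ℝ) (c c' : C) (B : ℤ) :
    Int.fract (shift ν ((B:ℝ) - ν c) c') =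
      if Int.fract (ν c) ≤ Int.fract (ν c') then Int.fract (ν c') - Int.fract (ν c)
      else Int.fract (ν c') - Int.fract (ν c) + 1 := by
  rw [shift_decomp, Int.fract_intCast_add, small_fract
    (by have := fract_bounds (ν c'); have := fract_bounds (ν c); linarith)
    (by have := fract_bounds (ν c'); have := fract_bounds (ν c); linarith)]
  simp only [sub_nonneg]

lemma cmp_iff {x x₁ x₂ : ℝ} (hx : 0 ≤ x) (hx' : x < 1) (h1 : 0 ≤ x₁) (h1' : x₁ < 1)
    (h2 : 0 ≤ x₂) (h2' : x₂ < 1) :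
    ((if x ≤ x₁ then x₁ - x else x₁ - x + 1) ≤ (if x ≤ x₂ then x₂ - x else x₂ - x + 1)) ↔
      ((x ≤ x₁ ∧ ¬ x ≤ x₂) ∨ ((x ≤ x₁ ↔ x ≤ x₂) ∧ x₁ ≤ x₂)) := by
  split_ifs with ha hb hb
  · constructor
    · intro h; right; exact ⟨by tauto, by linarith⟩
    · rintro (⟨_, h⟩ | ⟨_, h⟩)
      · tauto
      · linarith
  · constructor
    · intro _; left; exact ⟨ha, hb⟩
    · intro _; linarith
  · constructor
    · intro h; exfalso; linarith
    · rintro (⟨h, _⟩ | ⟨h, _⟩) <;> tauto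
  · constructor
    · intro h; right; exact ⟨by tauto, by linarith⟩
    · rintro (⟨h, _⟩ | ⟨_, h⟩)
      · tauto
      · linarith


lemma fract_zero_iff {C : Type*} (ν : C → ℝ) (c c' : C) (B : ℤ) :
    Int.fract (shift ν ((B:ℝ) - ν c) c') = 0 ↔
      (Int.fract (ν c) ≤ Int.fract (ν c') ∧ Int.fract (ν c') ≤ Int.fract (ν c)) := by
  rw [shift_fract]
  split_ifs with h
  · constructor
    · intro e; exact ⟨h, by linarith⟩
    · rintro ⟨_, e⟩; linarith
  · constructor
    · intro e
      exfalso
      have := fract_bounds (ν c'); have := fract_bounds (ν c)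
      linarith
    · rintro ⟨e, _⟩; tauto

lemma key_equiv {C : Type*} {ν μ : C → ℝ} (h : RegionEquiv ν μ) (c : C) (B : ℤ) :
    RegionEquiv (shift ν ((B:ℝ) - ν c)) (shift μ ((B:ℝ) - μ c)) := by
  constructor
  · intro c'
    rw [shift_floor, shift_floor, h.1 c, h.1 c']
    congr 1
    simp only [h.2 c c']
  · intro c₁ c₂
    rw [shift_fract, shift_fract, shift_fract, shift_fract,
      cmp_iff (Int.fract_nonneg _) (Int.fract_lt_one _) (Int.fract_nonneg _)
        (Int.fract_lt_one _) (Int.fract_nonneg _) (Int.fract_lt_one _),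
      cmp_iff (Int.fract_nonneg _) (Int.fract_lt_one _) (Int.fract_nonneg _)
        (Int.fract_lt_one _) (Int.fract_nonneg _) (Int.fract_lt_one _)]
    simp only [h.2 c c₁, h.2 c c₂, h.2 c₁ c₂]

lemma key_valid {C : Type*} {k : ℕ} {ν μ : C → ℝ} (h : RegionEquiv ν μ) (c : C) (B : ℤ)
    (hμ : Valid k (shift μ ((B:ℝ) - μ c))) : Valid k (shift ν ((B:ℝ) - ν c)) := by
  intro c'
  have hfl : ⌊shift ν ((B:ℝ) - ν c) c'⌋ = ⌊shift μ ((B:ℝ) - μ c) c'⌋ := (key_equiv h c B).1 c'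
  obtain ⟨hμ1, hμ2⟩ := hμ c'
  constructor
  · calc (0:ℝ) ≤ (⌊shift μ ((B:ℝ) - μ c) c'⌋ : ℝ) := by
          exact_mod_cast Int.floor_nonneg.2 hμ1
      _ = (⌊shift ν ((B:ℝ) - ν c) c'⌋ : ℝ) := by rw [hfl]
      _ ≤ _ := Int.floor_le _
  · by_cases hz : Int.fract (shift ν ((B:ℝ) - ν c) c') = 0
    · have hself : shift ν ((B:ℝ) - ν c) c' = (⌊shift ν ((B:ℝ) - ν c) c'⌋ : ℝ) := by
        rw [Int.fract] at hz; linarith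
      rw [hself, hfl]
      calc (⌊shift μ ((B:ℝ) - μ c) c'⌋ : ℝ) ≤ shift μ ((B:ℝ) - μ c) c' := Int.floor_le _
        _ ≤ (k:ℝ) := hμ2
    · have hz' : Int.fract (shift μ ((B:ℝ) - μ c) c') ≠ 0 := by
        intro e
        apply hz
        rw [fract_zero_iff] at e ⊢
        rw [h.2 c c', h.2 c' c]
        exact e
      have hpos : 0 < Int.fract (shift μ ((B:ℝ) - μ c) c') :=
        lt_of_le_of_ne (Int.fract_nonneg _) (Ne.symm hz')
      have hflt : (⌊shift μ ((B:ℝ) - μ c) c'⌋ : ℝ) < shift μ ((B:ℝ) - μ c) c' := by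
        rw [Int.fract] at hpos; linarith
      have h1 : ⌊shift μ ((B:ℝ) - μ c) c'⌋ < (k:ℤ) := by
        exact_mod_cast lt_of_lt_of_le hflt hμ2
      have h2 : (⌊shift μ ((B:ℝ) - μ c) c'⌋ : ℝ) + 1 ≤ (k:ℝ) := by
        exact_mod_cast Int.lt_iff_add_one_le.mp h1
      have h3 : shift ν ((B:ℝ) - ν c) c' < (⌊shift ν ((B:ℝ) - ν c) c'⌋ : ℝ) + 1 :=
        Int.lt_floor_add_one _
      rw [hfl] at h3
      linarith
theorem stmt16 {C : Type*} [Fintype C] (k : ℕ) (P' : Set (C → ℝ))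
    (hP' : IsRegion k P') (hthin : Thin k P') :
    ∃ b : ℕ, b ≤ k ∧ ∃ c : C,
      ∀ P, IsRegion k P → Reach k P P' →
        ∀ ν ∈ P, shift ν ((b : ℝ) - ν c) ∈ P' := by
  obtain ⟨ν₀, hν₀v, hP'eq⟩ := hP'
  have hν₀mem : ν₀ ∈ P' := by rw [hP'eq]; exact ⟨hν₀v, regEquiv_refl ν₀⟩
  cases isEmpty_or_nonempty C with
  | inl hE =>
      exact absurd (by
          have he : shift ν₀ 1 = ν₀ := funext fun c => isEmptyElim c
          rw [he]; exact hν₀mem)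
        (hthin ν₀ hν₀mem 1 one_pos (fun c => isEmptyElim c))
  | inr hNE =>
    have hzero : ∀ ν ∈ P', ∃ c', Int.fract (ν c') = 0 := by
      intro ν hν
      by_contra hc
      push_neg at hc
      have hpos : ∀ c', 0 < Int.fract (ν c') :=
        fun c' => lt_of_le_of_ne (Int.fract_nonneg _) (Ne.symm (hc c'))
      obtain ⟨cm, -, hcm⟩ := Finset.exists_max_image Finset.univ
        (fun c' => Int.fract (ν c')) ⟨Classical.arbitrary C, Finset.mem_univ _⟩
      have hcm' : ∀ c', Int.fract (ν c') ≤ Int.fract (ν cm) :=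
        fun c' => hcm c' (Finset.mem_univ _)
      have hM1 : Int.fract (ν cm) < 1 := Int.fract_lt_one _
      set ε := (1 - Int.fract (ν cm)) / 2 with hεdef
      have hε : 0 < ε := by rw [hεdef]; linarith
      have hsmall : ∀ c', Int.fract (ν c') + ε < 1 := by
        intro c'; have := hcm' c'; rw [hεdef]; linarith
      have hνmem := hν
      rw [hP'eq] at hνmem
      obtain ⟨hνv, hνe⟩ := hνmem
      have hffl : ∀ c', ⌊ν c' + ε⌋ = ⌊ν c'⌋ ∧ Int.fract (ν c' + ε) = Int.fract (ν c') + ε := by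
        intro c'
        have hd : ν c' + ε = ((⌊ν c'⌋ : ℤ) : ℝ) + (Int.fract (ν c') + ε) := by
          rw [Int.fract]; ring
        have hnn : 0 ≤ Int.fract (ν c') + ε :=
          add_nonneg (Int.fract_nonneg _) hε.le
        constructor
        · rw [hd, Int.floor_intCast_add, Int.floor_eq_zero_iff.2 ⟨hnn, hsmall c'⟩, add_zero]
        · rw [hd, Int.fract_intCast_add, Int.fract_eq_self.2 ⟨hnn, hsmall c'⟩]
      have hvalid : Valid k (shift ν ε) := by
        intro c'
        obtain ⟨h1, h2⟩ := hνv c'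
        constructor
        · show 0 ≤ ν c' + ε; linarith
        · show ν c' + ε ≤ (k:ℝ)
          have hfl : (⌊ν c'⌋:ℝ) + 1 ≤ (k:ℝ) := by
            have hq : (⌊ν c'⌋:ℝ) < ν c' := by
              have := hpos c'; rw [Int.fract] at this; linarith
            have hq2 : ⌊ν c'⌋ < (k:ℤ) := by exact_mod_cast lt_of_lt_of_le hq h2
            exact_mod_cast Int.lt_iff_add_one_le.mp hq2
          have hfr := Int.floor_add_fract (ν c')
          have := hsmall c'
          linarith
      have hmem' : shift ν ε ∈ P' := by
        rw [hP'eq]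
        refine ⟨hvalid, regEquiv_trans ?_ hνe⟩
        constructor
        · intro c'; exact (hffl c').1
        · intro c₁ c₂
          show Int.fract (ν c₁ + ε) ≤ Int.fract (ν c₂ + ε) ↔ _
          rw [(hffl c₁).2, (hffl c₂).2]
          exact add_le_add_iff_right ε
      exact hthin ν hν ε hε hvalid hmem'
    obtain ⟨c, -, hcmin⟩ := Finset.exists_min_image Finset.univ
      (fun c' => Int.fract (ν₀ c')) ⟨Classical.arbitrary C, Finset.mem_univ _⟩
    have hcmin' : ∀ c', Int.fract (ν₀ c) ≤ Int.fract (ν₀ c') :=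
      fun c' => hcmin c' (Finset.mem_univ _)
    have hc0 : Int.fract (ν₀ c) = 0 := by
      obtain ⟨c0, hc0⟩ := hzero ν₀ hν₀mem
      have := hcmin' c0
      have := Int.fract_nonneg (ν₀ c)
      linarith
    set B : ℤ := ⌊ν₀ c⌋ with hBdef
    have hBval : ((B:ℤ):ℝ) = ν₀ c := by
      rw [Int.fract] at hc0; rw [hBdef]; linarith
    have hB0 : 0 ≤ B := Int.floor_nonneg.2 (hν₀v c).1
    refine ⟨B.toNat, ?_, c, ?_⟩
    · have h1 : (B:ℝ) ≤ (k:ℝ) := by rw [hBval]; exact (hν₀v c).2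
      have hBk : B ≤ (k:ℤ) := by exact_mod_cast h1
      exact Int.toNat_le.mpr hBk
    · intro P hP hreach ν hν
      obtain ⟨μ₀, hμ₀v, hPeq⟩ := hP
      obtain ⟨μ, hμP, t, ht0, hμt⟩ := hreach
      have hPB : ∀ w ∈ P', w c = (B:ℝ) := by
        intro w hw
        have hw' := hw
        rw [hP'eq] at hw'
        obtain ⟨hwv, hwe⟩ := hw'
        obtain ⟨c0, hc0'⟩ := hzero w hw
        have h1 : Int.fract (w c) ≤ Int.fract (w c0) := (hwe.2 c c0).2 (hcmin' c0)
        have h2 : Int.fract (w c) = 0 := by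
          have := Int.fract_nonneg (w c); rw [hc0'] at h1; linarith
        have h3 : ⌊w c⌋ = B := by rw [hBdef]; exact hwe.1 c
        rw [Int.fract] at h2
        rw [← h3]
        linarith
      have hμB : μ c + t = (B:ℝ) := hPB _ hμt
      have ht : (B:ℝ) - μ c = t := by linarith
      have hτμ : shift μ ((B:ℝ) - μ c) ∈ P' := by rw [ht]; exact hμt
      have hequiv : RegionEquiv ν μ := by
        rw [hPeq] at hν hμP
        exact regEquiv_trans hν.2 (regEquiv_symm hμP.2)
      rw [hP'eq] at hτμ ⊢
      obtain ⟨hτμv, hτμe⟩ := hτμ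
      have hcast : ((B.toNat : ℕ) : ℝ) = ((B:ℤ):ℝ) := by
        rw [← Int.cast_natCast (R := ℝ), Int.toNat_of_nonneg hB0]
      rw [hcast]
      exact ⟨key_valid hequiv c B hτμv, regEquiv_trans (key_equiv hequiv c B) hτμe⟩
end
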